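/- arXiv:1305.0595 — 4 statements merged into one kernel-verified Lean document; each statement's English description precedes it below -/
import Mathlib

section
/- Let L = ⊕_{n≥0} L_n be a graded ℂ-subalgebra of V_ν[t] (elements of L_n of the form f t^n with f ∈ V_ν), where ν is a valuation with residue field ℂ and value group (ℤ^d)_lex. Define S(L) = { (γ, n) ∈ ℤ^d × ℕ : ∃ f ∈ L_n with ν(f) = γ }. Then S(L) is a subsemigroup of ℤ^{d+1} and dim_ℂ L_n = #S(L)_n for every n ≥ 1, where S(L)_n = { γ : (γ, n) ∈ S(L) }. -/
/-!
Elements of pairwise distinct values are linearly independent over `ℂ`. Conversely, since the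
residue field is `ℂ`, an element of `L_n` can be corrected by a multiple of an element of the same
value to an element of strictly larger value; as `L_n` takes only finitely many values, this shows
that one element of each value spans `L_n`.
-/

noncomputable section

instance (priority := 10000) (d : ℕ) : WellFoundedLT (Fin d) := inferInstance

/-- ℤ^d with the lexicographic order. -/
abbrev ZdLex (d : ℕ) := Lex (Fin d → ℤ)

namespace AddValuation

theorem map_sum_eq_of_lt {R Γ₀ ι : Type*} [Ring R]
    [LinearOrderedAddCommMonoidWithTop Γ₀] (v : AddValuation R Γ₀) [DecidableEq ι]
    {s : Finset ι} {f : ι → R} {j : ι} (hj : j ∈ s) (hf : ∀ i ∈ s \ {j}, v (f j) < v (f i)) :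
    v (∑ i ∈ s, f i) = v (f j) :=
  Valuation.map_sum_eq_of_lt v hj hf

variable {k K Γ : Type*} [Field k] [Field K] [Algebra k K]
  [AddCommGroup Γ] [LinearOrder Γ] [IsOrderedAddMonoid Γ] (ν : AddValuation K (WithTop Γ))

theorem map_smul_of_ne_zero (hk : ∀ c : k, c ≠ 0 → ν (algebraMap k K c) = 0) {c : k}
    (hc : c ≠ 0) (f : K) : ν (c • f) = ν f := by
  rw [Algebra.smul_def, ν.map_mul, hk c hc, zero_add]

/-- In a nontrivial relation, the sum would take the least value of its terms rather than `⊤`. -/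
theorem linearIndependent_of_injective_comp {ι : Type*}
    (hk : ∀ c : k, c ≠ 0 → ν (algebraMap k K c) = 0) {F : ι → K} (hF : ∀ i, F i ≠ 0) (hinj : Function.Injective (ν ∘ F)) :
    LinearIndependent k F := by
  classical
  rw [linearIndependent_iff]
  intro l hl
  by_contra hl0
  obtain ⟨j, hj, hjmin⟩ :=
    l.support.exists_min_image (fun i => ν (F i)) (Finsupp.support_nonempty_iff.2 hl0)
  have hval : ∀ i ∈ l.support, ν (l i • F i) = ν (F i) := fun i hi =>
    ν.map_smul_of_ne_zero hk (Finsupp.mem_support_iff.1 hi) (F i)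
  have hsum : ν (∑ i ∈ l.support, l i • F i) = ν (F j) := by
    rw [ν.map_sum_eq_of_lt hj, hval j hj]
    intro i hi
    obtain ⟨hi, hij⟩ := Finset.mem_sdiff.1 hi
    rw [hval i hi, hval j hj]
    exact (hjmin i hi).lt_of_ne fun h => Finset.notMem_singleton.1 hij (hinj h).symm
  rw [Finsupp.linearCombination_apply, Finsupp.sum] at hl
  rw [hl, ν.map_zero] at hsum
  exact hF j ((ν.top_iff).1 hsum.symm)

theorem exists_lt_map_sub_smul
    (hres : ∀ x : K, 0 ≤ ν x → ∃ c : k, 0 < ν (x - algebraMap k K c))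
    {f g : K} (hg : g ≠ 0) (hfg : ν f = ν g) : ∃ c : k, ν g < ν (f - c • g) := by
  have hgtop : ν g ≠ ⊤ := (ν.ne_top_iff).2 hg
  have hquot : ν (f / g) = 0 := by
    rw [ν.map_div, hfg, LinearOrderedAddCommGroupWithTop.sub_self_eq_zero_of_ne_top hgtop]
  obtain ⟨c, hc⟩ := hres (f / g) hquot.ge
  refine ⟨c, ?_⟩
  have hfactor : f - c • g = g * (f / g - algebraMap k K c) := by
    rw [Algebra.smul_def, mul_sub, mul_div_cancel₀ f hg, mul_comm]
  calc ν g = ν g + 0 := (add_zero _).symm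
    _ < ν g + ν (f / g - algebraMap k K c) := WithTop.add_lt_add_left hgtop hc
    _ = ν (f - c • g) := by rw [hfactor, ν.map_mul]

/-- Otherwise an element of `W \ U` of maximal value could be pushed to a larger value by
subtracting a multiple of an element of `U`. -/
theorem eq_of_le_of_forall_exists_map_eq
    (hres : ∀ x : K, 0 ≤ ν x → ∃ c : k, 0 < ν (x - algebraMap k K c))
    {U W : Submodule k K} (hUW : U ≤ W) (hfin : (ν '' W).Finite)
    (hval : ∀ f ∈ W, ∃ g ∈ U, ν g = ν f) : U = W := by
  by_contra hne
  have hdiff : ((W : Set K) \ U).Nonempty :=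
    Set.sdiff_nonempty.2 fun h => hne (le_antisymm hUW h)
  obtain ⟨f, ⟨hfW, hfU⟩, hfmax⟩ :=
    Set.Finite.exists_maximalFor' ν _ (hfin.subset (Set.image_mono Set.sdiff_subset)) hdiff
  obtain ⟨g, hgU, hgf⟩ := hval f hfW
  have hg : g ≠ 0 := by
    rintro rfl
    exact hfU (by rw [(ν.top_iff).1 (hgf.symm.trans ν.map_zero)]; exact U.zero_mem)
  obtain ⟨c, hc⟩ := ν.exists_lt_map_sub_smul hres hg hgf.symm
  have hnew : f - c • g ∈ (W : Set K) \ U :=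
    ⟨W.sub_mem hfW (W.smul_mem c (hUW hgU)), fun h => hfU (by
      simpa using U.add_mem h (U.smul_mem c hgU))⟩
  have hlt : ν f < ν (f - c • g) := hgf ▸ hc
  exact hlt.not_ge (hfmax hnew hlt.le)

/-- One element of each value forms a basis of `W`. -/
theorem finrank_eq_natCard_values
    (hk : ∀ c : k, c ≠ 0 → ν (algebraMap k K c) = 0)
    (hres : ∀ x : K, 0 ≤ ν x → ∃ c : k, 0 < ν (x - algebraMap k K c))
    (W : Submodule k K) [FiniteDimensional k W] :
    Module.finrank k W = Nat.card {γ : Γ | ∃ f ∈ W, ν f = (γ : WithTop Γ)} := by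
  set S := {γ : Γ | ∃ f ∈ W, ν f = (γ : WithTop Γ)}
  choose F hFW hFν using fun γ : S => γ.2
  have hF0 : ∀ γ, F γ ≠ 0 := fun γ h => WithTop.coe_ne_top (by rw [← hFν γ, h, ν.map_zero])
  have hli : LinearIndependent k F := ν.linearIndependent_of_injective_comp hk hF0
    fun γ δ h => Subtype.ext (WithTop.coe_injective ((hFν γ).symm.trans (h.trans (hFν δ))))
  have : Finite S := (LinearIndependent.of_comp W.subtype
    (v := fun γ => (⟨F γ, hFW γ⟩ : W)) hli).finite
  have : Fintype S := Fintype.ofFinite S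
  have hrep : ∀ f ∈ W, f ≠ 0 → ∃ γ : S, ν (F γ) = ν f := fun f hfW hf => by
    obtain ⟨γ, hγ⟩ := WithTop.ne_top_iff_exists.1 ((ν.ne_top_iff).2 hf)
    exact ⟨⟨γ, f, hfW, hγ.symm⟩, by rw [hFν, hγ]⟩
  have hspan : Submodule.span k (Set.range F) = W := by
    refine ν.eq_of_le_of_forall_exists_map_eq hres
      (Submodule.span_le.2 (Set.range_subset_iff.2 hFW)) ?_ ?_
    · refine ((Set.finite_range F).image ν |>.insert ⊤).subset ?_
      rintro _ ⟨f, hfW, rfl⟩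
      by_cases hf : f = 0
      · simp [hf]
      · obtain ⟨γ, hγ⟩ := hrep f hfW hf
        exact Or.inr ⟨F γ, Set.mem_range_self γ, hγ⟩
    · intro f hfW
      by_cases hf : f = 0
      · exact ⟨0, Submodule.zero_mem _, by rw [hf]⟩
      · obtain ⟨γ, hγ⟩ := hrep f hfW hf
        exact ⟨F γ, Submodule.subset_span (Set.mem_range_self γ), hγ⟩
  rw [← hspan, finrank_span_eq_card hli, Nat.card_eq_fintype_card]

end AddValuation

theorem value_semigroup_of_graded_linear_series_general {K : Type} [Field K] [Algebra ℂ K]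
    (d : ℕ) (ν : AddValuation K (WithTop (ZdLex d)))
    (hC0 : ∀ c : ℂ, c ≠ 0 → ν (algebraMap ℂ K c) = 0)
    (hres : ∀ x : K, (0 : WithTop (ZdLex d)) ≤ ν x →
      ∃ c : ℂ, (0 : WithTop (ZdLex d)) < ν (x - algebraMap ℂ K c))
    (L : ℕ → Submodule ℂ K) (hfd : ∀ n, FiniteDimensional ℂ (L n))
    (hmul : ∀ m n : ℕ, ∀ f ∈ L m, ∀ g ∈ L n, f * g ∈ L (m + n)) :
    (∀ a ∈ {p : ZdLex d × ℕ | ∃ f ∈ L p.2, ν f = (p.1 : WithTop (ZdLex d))},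
     ∀ b ∈ {p : ZdLex d × ℕ | ∃ f ∈ L p.2, ν f = (p.1 : WithTop (ZdLex d))},
      a + b ∈ {p : ZdLex d × ℕ | ∃ f ∈ L p.2, ν f = (p.1 : WithTop (ZdLex d))}) ∧
    (∀ n : ℕ, 1 ≤ n →
      Module.finrank ℂ (L n)
        = Nat.card {γ : ZdLex d | ∃ f ∈ L n, ν f = (γ : WithTop (ZdLex d))}) := by
  refine ⟨?_, fun n _ => ν.finrank_eq_natCard_values hC0 hres (L n)⟩
  rintro ⟨γ, m⟩ ⟨f, hf, hνf⟩ ⟨δ, n⟩ ⟨g, hg, hνg⟩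
  exact ⟨f * g, hmul m n f hf g hg, by rw [ν.map_mul, hνf, hνg]; rfl⟩

/-- Given a graded ℂ-subalgebra L = ⊕ L_n of V_ν[t] (ν a valuation with residue field ℂ and
value group (ℤ^d)_lex), the set S(L) = {(γ,n) : ∃ f ∈ L_n, ν(f) = γ} is a subsemigroup of
ℤ^{d+1} and dim_ℂ L_n = #S(L)_n for every n ≥ 1. -/
theorem value_semigroup_of_graded_linear_series {K : Type} [Field K] [Algebra ℂ K]
    (d : ℕ) (ν : AddValuation K (WithTop (ZdLex d)))
    (hC0 : ∀ c : ℂ, c ≠ 0 → ν (algebraMap ℂ K c) = 0)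
    (hres : ∀ x : K, (0 : WithTop (ZdLex d)) ≤ ν x →
      ∃ c : ℂ, (0 : WithTop (ZdLex d)) < ν (x - algebraMap ℂ K c))
    (L : ℕ → Submodule ℂ K) (hfd : ∀ n, FiniteDimensional ℂ (L n))
    (hLV : ∀ n, ∀ f ∈ L n, (0 : WithTop (ZdLex d)) ≤ ν f)
    (hmul : ∀ m n : ℕ, ∀ f ∈ L m, ∀ g ∈ L n, f * g ∈ L (m + n)) :
    (∀ a ∈ {p : ZdLex d × ℕ | ∃ f ∈ L p.2, ν f = (p.1 : WithTop (ZdLex d))},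
     ∀ b ∈ {p : ZdLex d × ℕ | ∃ f ∈ L p.2, ν f = (p.1 : WithTop (ZdLex d))},
      a + b ∈ {p : ZdLex d × ℕ | ∃ f ∈ L p.2, ν f = (p.1 : WithTop (ZdLex d))}) ∧
    (∀ n : ℕ, 1 ≤ n →
      Module.finrank ℂ (L n)
        = Nat.card {γ : ZdLex d | ∃ f ∈ L n, ν f = (γ : WithTop (ZdLex d))}) :=
  value_semigroup_of_graded_linear_series_general d ν hC0 hres L hfd hmul
end
end

section
/- Suppose (a_n)_{n≥0} is a sequence of nonnegative reals with a_n = dim_ℂ L_n for a graded linear series L, and suppose L decomposes via a filtration into graded linear series M⁰ = L ⊃ M¹ ⊃ ⋯ ⊃ M^s = 0 with dim_ℂ L_n = Σ_{i=1}^s dim_ℂ (M^{i-1}/M^i)_n for all n, where each quotient series N^i = M^{i-1}/M^i satisfies: either κ(N^i) < κ, or κ(N^i) = κ and lim_{n→∞} dim_ℂ N^i_{nm_i}/n^κ exists (with dim N^i_n = 0 when m_i ∤ n) for some positive integer m_i. Then, setting r = lcm{ m_i : κ(N^i) = κ }, for every fixed a ∈ ℕ the limit lim_{n→∞} dim_ℂ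 L_{a+nr} / n^κ exists. -/
/-!
Along the progression `a + n r`, every summand `dim N^i_{a+nr} / n^κ` converges. Rescaling the
index by the affine map `n ↦ b + n d` only multiplies a limit of `g k / k^κ` by `d^κ`; this handles
the pieces of lower order and, since `m_i ∣ r`, the periodic pieces when `m_i ∣ a`, where
`a + n r = m_i (a' + n r')`. When `m_i ∤ a`, no term of the progression is a multiple of `m_i`, so
the summand vanishes identically.
-/

open Filter Topology

lemma tendsto_add_mul_div_pow_atTop (κ b d : ℕ) :
    Tendsto (fun n : ℕ => (((b + n * d : ℕ) : ℝ) / n) ^ κ) atTop (𝓝 ((d : ℝ) ^ κ)) := by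
  have h : Tendsto (fun n : ℕ => (b : ℝ) / n + d) atTop (𝓝 d) := by
    simpa using (tendsto_const_div_atTop_nhds_zero_nat (b : ℝ)).add_const (d : ℝ)
  refine (h.pow κ).congr' ?_
  filter_upwards [eventually_ne_atTop 0] with n hn
  rw [Nat.cast_add, Nat.cast_mul, add_div, mul_div_cancel_left₀ _ (Nat.cast_ne_zero.mpr hn)]

lemma tendsto_div_pow_comp_add_mul {κ : ℕ} {g : ℕ → ℝ} {c : ℝ}
    (hg : Tendsto (fun k : ℕ => g k / (k : ℝ) ^ κ) atTop (𝓝 c)) (b : ℕ) {d : ℕ} (hd : 0 < d) :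
    Tendsto (fun n : ℕ => g (b + n * d) / (n : ℝ) ^ κ) atTop (𝓝 (c * (d : ℝ) ^ κ)) := by
  have hlin : Tendsto (fun n : ℕ => b + n * d) atTop atTop :=
    tendsto_atTop_mono (fun n => le_add_left (Nat.le_mul_of_pos_right n hd)) tendsto_id
  refine ((hg.comp hlin).mul (tendsto_add_mul_div_pow_atTop κ b d)).congr' ?_
  filter_upwards [eventually_ne_atTop 0] with n hn
  have hpos : ((b + n * d : ℕ) : ℝ) ≠ 0 := by positivity
  simp only [Function.comp_apply, div_pow]
  field_simp

lemma exists_tendsto_div_pow_of_support_dvd {κ m r : ℕ} {g : ℕ → ℝ}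
    (hsupp : ∀ n, ¬ m ∣ n → g n = 0) {c : ℝ}
    (hg : Tendsto (fun k : ℕ => g (m * k) / (k : ℝ) ^ κ) atTop (𝓝 c))
    (hmr : m ∣ r) (hr : 0 < r) (a : ℕ) :
    ∃ ℓ, Tendsto (fun n : ℕ => g (a + n * r) / (n : ℝ) ^ κ) atTop (𝓝 ℓ) := by
  obtain ⟨r', rfl⟩ := hmr
  by_cases ha : m ∣ a
  · obtain ⟨a', rfl⟩ := ha
    refine ⟨_, (tendsto_div_pow_comp_add_mul hg a' (Nat.pos_of_mul_pos_left hr)).congr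
      fun n => ?_⟩
    rw [mul_add, mul_left_comm]
  · refine ⟨0, tendsto_const_nhds.congr fun n => ?_⟩
    have hndvd : ¬ m ∣ a + n * (m * r') := fun hdvd =>
      ha ((Nat.dvd_add_left (dvd_mul_of_dvd_right (dvd_mul_right m r') n)).mp hdvd)
    rw [hsupp _ hndvd, zero_div]

/-- Suppose dim_ℂ L_n = Σ_{i} dim_ℂ N^i_n for graded pieces of quotients N^i of a filtration
of L, where each N^i either has dimension growth of lower order than n^κ, or is supported in
degrees divisible by some m_i ≥ 1 with dim N^i_{m_i n}/n^κ convergent. Then with r a common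
multiple of the relevant m_i (e.g. their lcm), for every fixed a ∈ ℕ the limit
lim_n dim_ℂ L_{a+nr}/n^κ exists. -/
theorem filtration_arithmetic_limit (κ : ℕ) (s : ℕ) (A : ℕ → ℕ) (N : Fin s → ℕ → ℕ)
    (hA : ∀ n : ℕ, 1 ≤ n → A n = ∑ i : Fin s, N i n)
    (m : Fin s → ℕ) (r : ℕ) (hr : 0 < r)
    (h : ∀ i : Fin s,
      (Tendsto (fun n : ℕ => (N i n : ℝ) / (n : ℝ) ^ κ) atTop (nhds 0)) ∨
      (0 < m i ∧ (∀ n : ℕ, ¬ m i ∣ n → N i n = 0) ∧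
        (∃ c : ℝ, Tendsto (fun n : ℕ => (N i (m i * n) : ℝ) / (n : ℝ) ^ κ) atTop (nhds c)) ∧
        m i ∣ r)) :
    ∀ a : ℕ, ∃ ℓ : ℝ,
      Tendsto (fun n : ℕ => (A (a + n * r) : ℝ) / (n : ℝ) ^ κ) atTop (nhds ℓ) := by
  intro a
  have hterm : ∀ i, ∃ ℓ : ℝ,
      Tendsto (fun n : ℕ => (N i (a + n * r) : ℝ) / (n : ℝ) ^ κ) atTop (𝓝 ℓ) := by
    intro i
    rcases h i with hsmall | ⟨-, hsupp, ⟨c, hc⟩, hmr⟩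
    · exact ⟨_, tendsto_div_pow_comp_add_mul hsmall a hr⟩
    · exact exists_tendsto_div_pow_of_support_dvd (g := fun n => (N i n : ℝ))
        (fun n hn => by simp [hsupp n hn]) hc hmr hr a
  choose ℓ hℓ using hterm
  refine ⟨∑ i, ℓ i, (tendsto_finsetSum _ fun i _ => hℓ i).congr' ?_⟩
  filter_upwards [eventually_ne_atTop 0] with n hn
  have hpos : 1 ≤ a + n * r := le_add_left (Nat.one_le_iff_ne_zero.mpr (mul_ne_zero hn hr.ne'))
  rw [hA _ hpos, Nat.cast_sum, Finset.sum_div]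
end

section
/- Let L = ⊕_{n≥0} L_n be a graded ℂ-algebra with each L_n finite-dimensional, L_0 = ℂ, and suppose there is an injective graded ℂ-algebra homomorphism L → ⊕_{i=1}^s L^i into a finite direct sum of graded linear series L^i, with dim_ℂ L_n ≤ Σ_i dim_ℂ L^i_n. Define σ(L) as the maximal number of algebraically independent homogeneous elements of positive degree. Then σ(L) = max_i σ(image of L in L^i). -/
/-!
If homogeneous elements `y₁, …, y_m` of `L` become algebraically dependent in every `L^i`, pick
for each `i` a nonzero relation `pᵢ`; the product `∏ pᵢ` is a nonzero polynomial (polynomial rings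
over `ℂ` are domains) that kills the image of `y` in every component, hence kills `y` itself since
`L → ⊕ L^i` is injective. So independence in `L` is witnessed in some component, and conversely
independence of images forces independence in `L`.
-/

theorem AlgebraicIndependent.exists_algebraicIndependent_apply {R κ ι : Type*} [CommRing R]
    [IsDomain R] [Fintype ι] {B : ι → Type*} [∀ i, CommRing (B i)] [∀ i, Algebra R (B i)]
    {y : κ → ∀ i, B i} (hy : AlgebraicIndependent R y) :
    ∃ i, AlgebraicIndependent R (fun k => y k i) := by
  by_contra! hdep
  simp only [algebraicIndependent_iff, not_forall, exists_prop] at hdep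
  choose p hp_root hp_ne using hdep
  have hprod_ne : ∏ i, p i ≠ 0 := Finset.prod_ne_zero_iff.mpr fun i _ => hp_ne i
  have hprod_root : MvPolynomial.aeval y (∏ i, p i) = 0 := by
    funext i
    change Pi.evalAlgHom R B i (MvPolynomial.aeval y (∏ i, p i)) = 0
    rw [MvPolynomial.comp_aeval_apply, map_prod]
    exact Finset.prod_eq_zero (Finset.mem_univ i) (hp_root i)
  exact hprod_ne (algebraicIndependent_iff.mp hy _ hprod_root)

theorem AlgebraicIndependent.exists_algebraicIndependent_comp_of_jointly_injective
    {R κ ι A : Type*} [CommRing R] [IsDomain R] [Fintype ι] [CommRing A] [Algebra R A]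
    {B : ι → Type*} [∀ i, CommRing (B i)] [∀ i, Algebra R (B i)] {φ : ∀ i, A →ₐ[R] B i}
    (hφ : ∀ x, (∀ i, φ i x = 0) → x = 0) {y : κ → A} (hy : AlgebraicIndependent R y) :
    ∃ i, AlgebraicIndependent R (φ i ∘ y) := by
  have hinj : Function.Injective (AlgHom.pi φ) :=
    (injective_iff_map_eq_zero _).mpr fun x hx => hφ x fun i => congrFun hx i
  exact (hy.map' hinj).exists_algebraicIndependent_apply

theorem sigma_eq_max_of_components_general
    (A : Type) [CommRing A] [Algebra ℂ A] (𝒜 : ℕ → Submodule ℂ A)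
    (s : ℕ)
    (B : Fin s → Type) [∀ i, CommRing (B i)] [∀ i, Algebra ℂ (B i)]
    (φ : ∀ i, A →ₐ[ℂ] B i)
    (hinj : ∀ x : A, (∀ i, φ i x = 0) → x = 0) :
    sSup {n : ℕ∞ | ∃ m : ℕ, n = (m : ℕ∞) ∧ ∃ y : Fin m → A,
        (∀ j, ∃ k : ℕ, 0 < k ∧ y j ∈ 𝒜 k) ∧ AlgebraicIndependent ℂ y}
      = ⨆ i : Fin s,
        sSup {n : ℕ∞ | ∃ m : ℕ, n = (m : ℕ∞) ∧ ∃ y : Fin m → A,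
          (∀ j, ∃ k : ℕ, 0 < k ∧ y j ∈ 𝒜 k) ∧
          AlgebraicIndependent ℂ (fun j => φ i (y j))} := by
  rw [← sSup_iUnion]
  congr 1
  ext n
  rw [Set.mem_iUnion]
  constructor
  · rintro ⟨m, rfl, y, hy_hom, hy⟩
    obtain ⟨i, hi⟩ := hy.exists_algebraicIndependent_comp_of_jointly_injective hinj
    exact ⟨i, m, rfl, y, hy_hom, hi⟩
  · rintro ⟨i, m, rfl, y, hy_hom, hi⟩
    exact ⟨m, rfl, y, hy_hom, hi.of_comp (φ i)⟩

/-- Let L be a graded ℂ-algebra with finite-dimensional graded pieces, L₀ = ℂ, embedded by a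
graded injective ℂ-algebra homomorphism into a finite direct sum of graded ℂ-algebras L^i.
Then σ(L) (the maximal number of algebraically independent homogeneous elements of positive
degree) equals the maximum over i of σ of the image of L in L^i. -/
theorem sigma_eq_max_of_components
    (A : Type) [CommRing A] [Algebra ℂ A] (𝒜 : ℕ → Submodule ℂ A) [GradedAlgebra 𝒜]
    (hfd : ∀ n, FiniteDimensional ℂ (𝒜 n)) (h0 : 𝒜 0 = (1 : Submodule ℂ A))
    (s : ℕ) (hs : 0 < s)
    (B : Fin s → Type) [∀ i, CommRing (B i)] [∀ i, Algebra ℂ (B i)]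
    (ℬ : ∀ i, ℕ → Submodule ℂ (B i)) [∀ i, GradedAlgebra (ℬ i)]
    (hfdB : ∀ i n, FiniteDimensional ℂ (ℬ i n)) (h0B : ∀ i, ℬ i 0 = (1 : Submodule ℂ (B i)))
    (φ : ∀ i, A →ₐ[ℂ] B i)
    (hgr : ∀ i n, ∀ x ∈ 𝒜 n, φ i x ∈ ℬ i n)
    (hinj : ∀ x : A, (∀ i, φ i x = 0) → x = 0) :
    sSup {n : ℕ∞ | ∃ m : ℕ, n = (m : ℕ∞) ∧ ∃ y : Fin m → A,
        (∀ j, ∃ k : ℕ, 0 < k ∧ y j ∈ 𝒜 k) ∧ AlgebraicIndependent ℂ y}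
      = ⨆ i : Fin s,
        sSup {n : ℕ∞ | ∃ m : ℕ, n = (m : ℕ∞) ∧ ∃ y : Fin m → A,
          (∀ j, ∃ k : ℕ, 0 < k ∧ y j ∈ 𝒜 k) ∧
          AlgebraicIndependent ℂ (fun j => φ i (y j))} :=
  sigma_eq_max_of_components_general A 𝒜 s B φ hinj
end

section
/- Let L = ⊕_{n≥0} L_n be a graded ℂ-algebra with L_0 = ℂ, all L_n finite-dimensional, and suppose there exists a constant γ > 0 and integer a ≥ 0 with dim_ℂ L_n < γ n^a for all n ≥ 1. If κ(L) ≥ 0 (i.e., some L_n ≠ 0 for n > 0), then there exist a positive constant α and a positive integer e such that dim_ℂ L_{en} > α n^{κ(L)} for all positive integers n, where κ(L) = σ(L) − 1 and σ(L) is the maximal number of algebraically independent homogeneous elements of positive degree. -/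
/-!
Take `y₀, …, y_κ` algebraically independent and homogeneous of degrees `kᵢ > 0`, and put
`e = ∏ kᵢ`. For every `f : Fin (κ + 1) →₀ ℕ` with `∑ fᵢ = n` the monomial `∏ yᵢ ^ ((e / kᵢ) fᵢ)`
lies in `L_{en}`; distinct `f` give distinct exponent vectors, so these monomials are linearly
independent. Hence `dim L_{en} ≥ C(n + κ, κ) ≥ n^κ / κ!`.
-/

noncomputable section

/-- σ(L) for a graded algebra, as an extended natural. -/
def sigmaGr (A : Type*) [CommRing A] [Algebra ℂ A] (𝒜 : ℕ → Submodule ℂ A) : ℕ∞ :=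
  sSup {n : ℕ∞ | ∃ m : ℕ, n = (m : ℕ∞) ∧ ∃ y : Fin m → A,
    (∀ j, ∃ k : ℕ, 0 < k ∧ y j ∈ 𝒜 k) ∧ AlgebraicIndependent ℂ y}

/-- the Kodaira-Iitaka dimension of a graded linear series with σ(L) > 0, namely σ(L) − 1. -/
def kappaGr (A : Type*) [CommRing A] [Algebra ℂ A] (𝒜 : ℕ → Submodule ℂ A) : ℕ∞ :=
  sigmaGr A 𝒜 - 1

open Finset
open scoped Nat

theorem AlgebraicIndependent.linearIndependent_finsuppProd {R A ι : Type*} [CommRing R]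
    [CommRing A] [Algebra R A] {y : ι → A} (hy : AlgebraicIndependent R y) :
    LinearIndependent R (fun f : ι →₀ ℕ => f.prod fun i c => y i ^ c) := by
  have h := (MvPolynomial.basisMonomials ι R).linearIndependent.map'
    (MvPolynomial.aeval y).toLinearMap (LinearMap.ker_eq_bot.mpr hy)
  simpa [Function.comp_def, MvPolynomial.aeval_monomial] using h

lemma pow_div_factorial_le_card_finsuppAntidiag (m n : ℕ) :
    (n : ℝ) ^ m / m ! ≤ #((univ : Finset (Fin (m + 1))).finsuppAntidiag n) := by
  rw [card_finsuppAntidiag_nat_eq_choose, card_univ, Fintype.card_fin,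
    show m + 1 + n - 1 = n + m by omega, Nat.choose_symm_add]
  calc (n : ℝ) ^ m / m ! ≤ ((n + m + 1 - m : ℕ) : ℝ) ^ m / m ! := by
        gcongr
        exact_mod_cast (by omega : n ≤ n + m + 1 - m)
    _ ≤ _ := Nat.pow_le_choose m (n + m)

section Graded

variable {K A : Type*} [Field K] [CommRing A] [Algebra K A] (𝒜 : ℕ → Submodule K A)
  [SetLike.GradedMonoid 𝒜]

theorem card_finsuppAntidiag_le_finrank {ι : Type*} [Fintype ι] [DecidableEq ι] {y : ι → A}
    (hy : AlgebraicIndependent K y) {k : ι → ℕ} (hk : ∀ i, 0 < k i)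
    (hyk : ∀ i, y i ∈ 𝒜 (k i)) (n : ℕ) [Module.Finite K (𝒜 ((∏ i, k i) * n))] :
    #((univ : Finset ι).finsuppAntidiag n) ≤ Module.finrank K (𝒜 ((∏ i, k i) * n)) := by
  set e := ∏ i, k i
  have hdvd (i : ι) : k i ∣ e := dvd_prod_of_mem k (mem_univ i)
  have hquot (i : ι) : 0 < e / k i :=
    Nat.div_pos (Nat.le_of_dvd (prod_pos fun j _ => hk j) (hdvd i)) (hk i)
  let scale (f : ι →₀ ℕ) : ι →₀ ℕ := Finsupp.equivFunOnFinite.symm fun i => e / k i * f i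
  have scale_injective : Function.Injective scale := fun f g hfg => by
    ext i
    exact Nat.eq_of_mul_eq_mul_left (hquot i) (DFunLike.congr_fun hfg i)
  let b (f : (univ : Finset ι).finsuppAntidiag n) : A :=
    (scale f).prod fun i c => y i ^ c
  have hb : LinearIndependent K b :=
    hy.linearIndependent_finsuppProd.comp _ (scale_injective.comp Subtype.val_injective)
  have hb_mem (f : (univ : Finset ι).finsuppAntidiag n) : b f ∈ 𝒜 (e * n) := by
    have hsum : ∑ i, (e / k i * f.1 i) • k i = e * n := by
      simp_rw [smul_eq_mul, mul_assoc, mul_comm (f.1 _), ← mul_assoc, Nat.div_mul_cancel (hdvd _),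
        ← mul_sum, (mem_finsuppAntidiag.mp f.2).1]
    rw [← hsum]
    simpa [b, scale, Finsupp.prod_fintype] using
      SetLike.prod_pow_mem_graded 𝒜 k y (fun i => e / k i * f.1 i) fun i _ => hyk i
  calc #((univ : Finset ι).finsuppAntidiag n)
      = Module.finrank K (Submodule.span K (Set.range b)) := by
        rw [finrank_span_eq_card hb, Fintype.card_coe]
    _ ≤ Module.finrank K (𝒜 (e * n)) :=
        Submodule.finrank_mono (Submodule.span_le.mpr (Set.range_subset_iff.mpr hb_mem))

end Graded

theorem exists_algebraicIndependent_of_sigmaGr_eq {A : Type*} [CommRing A] [Algebra ℂ A]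
    {𝒜 : ℕ → Submodule ℂ A} {m : ℕ} (hm : m ≠ 0) (h : sigmaGr A 𝒜 = m) :
    ∃ y : Fin m → A, (∀ j, ∃ k, 0 < k ∧ y j ∈ 𝒜 k) ∧ AlgebraicIndependent ℂ y := by
  have hfin := ENat.finite_of_sSup_lt_top (h ▸ ENat.natCast_lt_top m)
  have hmem := Set.Nonempty.csSup_mem (hs := hfin) ?_
  · rw [← sigmaGr, h] at hmem
    obtain ⟨m', hm', y, hy⟩ := hmem
    obtain rfl := Nat.cast_injective hm'
    exact ⟨y, hy⟩
  refine Set.nonempty_iff_ne_empty.mpr fun hS => hm ?_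
  rw [sigmaGr, hS, sSup_empty, bot_eq_zero, eq_comm, Nat.cast_eq_zero] at h
  exact h

theorem lower_growth_bound_general
    (A : Type) [CommRing A] [Algebra ℂ A] (𝒜 : ℕ → Submodule ℂ A) [GradedAlgebra 𝒜]
    (hfd : ∀ n, FiniteDimensional ℂ (𝒜 n))
    (hκ : 1 ≤ sigmaGr A 𝒜) (κ : ℕ) (hκval : (κ : ℕ∞) = kappaGr A 𝒜) :
    ∃ α : ℝ, 0 < α ∧ ∃ e : ℕ, 0 < e ∧
      ∀ n : ℕ, 0 < n → α * (n : ℝ) ^ κ < (Module.finrank ℂ (𝒜 (e * n)) : ℝ) := by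
  have hσ : sigmaGr A 𝒜 = (κ + 1 : ℕ) := by
    rw [Nat.cast_succ, hκval, kappaGr, tsub_add_cancel_of_le hκ]
  obtain ⟨y, hy, hind⟩ := exists_algebraicIndependent_of_sigmaGr_eq κ.succ_ne_zero hσ
  choose k hk hyk using hy
  refine ⟨1 / (2 * κ !), by positivity, ∏ i, k i, prod_pos fun i _ => hk i, fun n hn => ?_⟩
  have := hfd ((∏ i, k i) * n)
  have hdim := card_finsuppAntidiag_le_finrank 𝒜 hind hk hyk n
  have hpos : 0 < (n : ℝ) ^ κ / κ ! := by positivity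
  calc 1 / (2 * κ !) * (n : ℝ) ^ κ = (n : ℝ) ^ κ / κ ! / 2 := by ring
    _ < (n : ℝ) ^ κ / κ ! := half_lt_self hpos
    _ ≤ #((univ : Finset (Fin (κ + 1))).finsuppAntidiag n) :=
        pow_div_factorial_le_card_finsuppAntidiag κ n
    _ ≤ Module.finrank ℂ (𝒜 ((∏ i, k i) * n)) := by exact_mod_cast hdim

/-- Suppose L is a graded ℂ-algebra with L₀ = ℂ, finite-dimensional graded pieces, and
dim_ℂ L_n < γ n^a for all n ≥ 1. If κ(L) ≥ 0 (i.e. σ(L) ≥ 1), then there are α > 0 and a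
positive integer e with dim_ℂ L_{en} > α n^{κ(L)} for all n ≥ 1. -/
theorem lower_growth_bound
    (A : Type) [CommRing A] [Algebra ℂ A] (𝒜 : ℕ → Submodule ℂ A) [GradedAlgebra 𝒜]
    (hfd : ∀ n, FiniteDimensional ℂ (𝒜 n)) (h0 : 𝒜 0 = (1 : Submodule ℂ A))
    (γ : ℝ) (hγ : 0 < γ) (a : ℕ)
    (hup : ∀ n : ℕ, 1 ≤ n → (Module.finrank ℂ (𝒜 n) : ℝ) < γ * (n : ℝ) ^ a)
    (hκ : 1 ≤ sigmaGr A 𝒜) (κ : ℕ) (hκval : (κ : ℕ∞) = kappaGr A 𝒜) :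
    ∃ α : ℝ, 0 < α ∧ ∃ e : ℕ, 0 < e ∧
      ∀ n : ℕ, 0 < n → α * (n : ℝ) ^ κ < (Module.finrank ℂ (𝒜 (e * n)) : ℝ) :=
  lower_growth_bound_general A 𝒜 hfd hκ κ hκval
end
end
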